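/- arXiv:2303.07298 — 4 statements merged into one kernel-verified Lean document; each statement's English description precedes it below -/
import Mathlib

section
/- The limit as r tends to 1 (from above) of log base r of ((λ√r + √(Λλ)·r)/(λ√r + √(Λλ)))² equals 2√Λ/(√λ + √Λ). -/
open Real Filter Set

theorem limit_logb_ratio (lam Lam : ℝ) (hlam : 0 < lam) (hLam : lam < Lam) :
    Tendsto (fun r : ℝ =>
        Real.logb r (((lam * Real.sqrt r + Real.sqrt (Lam * lam) * r) /
          (lam * Real.sqrt r + Real.sqrt (Lam * lam))) ^ 2))
      (nhdsWithin 1 (Set.Ioi 1))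
      (nhds (2 * Real.sqrt Lam / (Real.sqrt lam + Real.sqrt Lam))) := by
  have hLam0 : 0 < Lam := hlam.trans hLam
  set c : ℝ := Real.sqrt (Lam * lam) with hc
  have hcpos : 0 < c := Real.sqrt_pos.mpr (by positivity)
  set f : ℝ → ℝ := fun r => (lam * Real.sqrt r + c * r) / (lam * Real.sqrt r + c) with hf
  have hden1 : lam * Real.sqrt 1 + c ≠ 0 := by
    rw [Real.sqrt_one]; positivity
  have hs : HasDerivAt Real.sqrt (1 / (2 * Real.sqrt 1)) 1 :=
    Real.hasDerivAt_sqrt one_ne_zero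
  have hN : HasDerivAt (fun r => lam * Real.sqrt r + c * r)
      (lam * (1 / (2 * Real.sqrt 1)) + c * 1) 1 :=
    (hs.const_mul lam).add ((hasDerivAt_id 1).const_mul c)
  have hD : HasDerivAt (fun r => lam * Real.sqrt r + c)
      (lam * (1 / (2 * Real.sqrt 1))) 1 :=
    (hs.const_mul lam).add_const c
  have hf' : HasDerivAt f (c / (lam + c)) 1 := by
    have h := hN.div hD hden1
    refine h.congr_deriv ?_
    rw [Real.sqrt_one]
    field_simp
    ring
  have hf1 : f 1 = 1 := by
    simp only [hf, Real.sqrt_one, mul_one]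
    field_simp
  have hlog : HasDerivAt (fun r => Real.log (f r)) (c / (lam + c)) 1 := by
    have h := hf'.log (by rw [hf1]; norm_num)
    rwa [hf1, div_one] at h
  have hd : c / (lam + c) = Real.sqrt Lam / (Real.sqrt lam + Real.sqrt Lam) := by
    have hsl : Real.sqrt lam ^ 2 = lam := Real.sq_sqrt hlam.le
    have hcm : c = Real.sqrt Lam * Real.sqrt lam := by
      rw [hc, Real.sqrt_mul hLam0.le]
    have hslpos : 0 < Real.sqrt lam := Real.sqrt_pos.mpr hlam
    have hsLpos : 0 < Real.sqrt Lam := Real.sqrt_pos.mpr hLam0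
    rw [hcm]
    rw [div_eq_div_iff (by nlinarith) (by positivity)]
    nlinarith
  have h1 : Tendsto (slope (fun r => Real.log (f r)) 1) (nhdsWithin 1 {1}ᶜ)
      (nhds (c / (lam + c))) := hasDerivAt_iff_tendsto_slope.mp hlog
  have h2 : Tendsto (slope Real.log 1) (nhdsWithin 1 {1}ᶜ) (nhds 1) := by
    have := hasDerivAt_iff_tendsto_slope.mp (Real.hasDerivAt_log one_ne_zero)
    simpa using this
  have h3 : Tendsto (fun r => 2 * (slope (fun r => Real.log (f r)) 1 r / slope Real.log 1 r))
      (nhdsWithin 1 {1}ᶜ) (nhds (2 * (c / (lam + c)))) := by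
    have := (h1.div h2 one_ne_zero).const_mul 2
    simpa using this
  have h4 : Tendsto (fun r => 2 * (slope (fun r => Real.log (f r)) 1 r / slope Real.log 1 r))
      (nhdsWithin 1 (Set.Ioi 1)) (nhds (2 * (c / (lam + c)))) :=
    h3.mono_left (nhdsWithin_mono 1 (fun x hx => ne_of_gt hx))
  have heq : ∀ᶠ r in nhdsWithin 1 (Set.Ioi 1),
      2 * (slope (fun r => Real.log (f r)) 1 r / slope Real.log 1 r)
        = Real.logb r (((lam * Real.sqrt r + c * r) /
            (lam * Real.sqrt r + c)) ^ 2) := by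
    filter_upwards [self_mem_nhdsWithin] with r hr
    have hr1 : (1:ℝ) < r := hr
    have hr0 : 0 < r := lt_trans one_pos hr1
    have hsr : 0 < Real.sqrt r := Real.sqrt_pos.mpr hr0
    have hfr : 0 < f r := div_pos (by positivity) (by positivity)
    have hsub : r - 1 ≠ 0 := sub_ne_zero.mpr (ne_of_gt hr1)
    have hlr : Real.log r ≠ 0 := ne_of_gt (Real.log_pos hr1)
    rw [slope_def_field, slope_def_field, hf1, Real.log_one]
    simp only [Real.logb, sub_zero]
    rw [Real.log_pow]
    show 2 * (Real.log (f r) / (r - 1) / (Real.log r / (r - 1))) = _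
    rw [div_div_div_eq, mul_comm (Real.log (f r)) (r-1), mul_div_mul_left _ _ hsub]
    push_cast
    ring
  have := h4.congr' heq
  have hval : 2 * (c / (lam + c)) = 2 * Real.sqrt Lam / (Real.sqrt lam + Real.sqrt Lam) := by
    rw [hd]; ring
  rwa [hval] at this
end

section
/- For every p with 0 < p < p_{λ,Λ} := 2√Λ/(√λ+√Λ) and every δ with 0 < δ < (p_{λ,Λ} − p)/10, there exists r with 1 < r < 2 such that r² > ((λ√r + √(Λλ)·r)/(λ√r + √(Λλ)))² > r^{p+2δ}. -/
open Real Filter Set Topology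

theorem exists_r_between (lam Lam p δ : ℝ) (h0 : 0 < lam) (h1 : lam < Lam)
    (hp : 0 < p) (hp2 : p < 2 * Real.sqrt Lam / (Real.sqrt lam + Real.sqrt Lam))
    (hδ : 0 < δ)
    (hδ2 : δ < (2 * Real.sqrt Lam / (Real.sqrt lam + Real.sqrt Lam) - p) / 10) :
    ∃ r : ℝ, 1 < r ∧ r < 2 ∧
      r ^ (2:ℝ) > ((lam * Real.sqrt r + Real.sqrt (Lam * lam) * r) /
        (lam * Real.sqrt r + Real.sqrt (Lam * lam))) ^ (2:ℝ) ∧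
      ((lam * Real.sqrt r + Real.sqrt (Lam * lam) * r) /
        (lam * Real.sqrt r + Real.sqrt (Lam * lam))) ^ (2:ℝ) > r ^ (p + 2 * δ) := by
  have hLam : 0 < Lam := h0.trans h1
  set c := Real.sqrt (Lam * lam) with hcdef
  have hc : 0 < c := Real.sqrt_pos.2 (by positivity)
  have hsl : 0 < Real.sqrt lam := Real.sqrt_pos.2 h0
  have hsL : 0 < Real.sqrt Lam := Real.sqrt_pos.2 hLam
  have hc' : c = Real.sqrt Lam * Real.sqrt lam := Real.sqrt_mul hLam.le lam
  have hl2 : Real.sqrt lam * Real.sqrt lam = lam := Real.mul_self_sqrt h0.le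
  -- identity for p_*
  have hps : 2 * Real.sqrt Lam / (Real.sqrt lam + Real.sqrt Lam) = 2 * c / (lam + c) := by
    rw [hc', ← hl2]
    have hne1 : Real.sqrt lam + Real.sqrt Lam ≠ 0 := by positivity
    have hne2 : Real.sqrt lam * Real.sqrt lam + Real.sqrt Lam * Real.sqrt lam ≠ 0 := by
      positivity
    field_simp
    have h3 : Real.sqrt (Real.sqrt lam ^ 2) ^ 2 = Real.sqrt lam ^ 2 := Real.sq_sqrt (sq_nonneg _)
    linear_combination (-1 : ℝ) * h3
  set G : ℝ → ℝ := fun r => (lam * Real.sqrt r + c * r) / (lam * Real.sqrt r + c) with hGdef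
  have hG1 : G 1 = 1 := by
    simp only [G, Real.sqrt_one, mul_one]
    exact div_self (by positivity)
  -- derivative of log ∘ G at 1
  have hsqrt : HasDerivAt Real.sqrt (1 / (2 * Real.sqrt 1)) 1 := Real.hasDerivAt_sqrt one_ne_zero
  have hN : HasDerivAt (fun r => lam * Real.sqrt r + c * r)
      (lam * (1 / (2 * Real.sqrt 1)) + c * 1) 1 :=
    (hsqrt.const_mul lam).add ((hasDerivAt_id 1).const_mul c)
  have hD : HasDerivAt (fun r => lam * Real.sqrt r + c)
      (lam * (1 / (2 * Real.sqrt 1))) 1 :=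
    (hsqrt.const_mul lam).add_const c
  have hDne : lam * Real.sqrt 1 + c ≠ 0 := by rw [Real.sqrt_one]; positivity
  have hGd : HasDerivAt G
      (((lam * (1 / (2 * Real.sqrt 1)) + c * 1) * (lam * Real.sqrt 1 + c) -
        (lam * Real.sqrt 1 + c * 1) * (lam * (1 / (2 * Real.sqrt 1)))) /
        (lam * Real.sqrt 1 + c) ^ 2) 1 := by
    exact hN.div hD hDne
  have hGne : G 1 ≠ 0 := by rw [hG1]; norm_num
  have hF : HasDerivAt (fun r => Real.log (G r)) (c / (lam + c)) 1 := by
    have := hGd.log hGne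
    convert this using 1
    rw [hG1, Real.sqrt_one]
    have hne : lam + c ≠ 0 := by positivity
    field_simp
    ring
  have hlogd : HasDerivAt Real.log 1 1 := by
    simpa using Real.hasDerivAt_log one_ne_zero
  have hmono : 𝓝[>] (1:ℝ) ≤ 𝓝[≠] (1:ℝ) :=
    nhdsWithin_mono 1 (fun x hx => hx.ne')
  have hs1 : Tendsto (slope (fun r => Real.log (G r)) 1) (𝓝[>] (1:ℝ)) (𝓝 (c / (lam + c))) :=
    (hasDerivAt_iff_tendsto_slope.mp hF).mono_left hmono
  have hs2 : Tendsto (slope Real.log 1) (𝓝[>] (1:ℝ)) (𝓝 1) :=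
    (hasDerivAt_iff_tendsto_slope.mp hlogd).mono_left hmono
  have hdiv : Tendsto (fun r => slope (fun r => Real.log (G r)) 1 r / slope Real.log 1 r)
      (𝓝[>] (1:ℝ)) (𝓝 (c / (lam + c))) := by
    have := hs1.div hs2 one_ne_zero
    rw [div_one] at this
    exact this
  have heq : (fun r => slope (fun r => Real.log (G r)) 1 r / slope Real.log 1 r)
      =ᶠ[𝓝[>] (1:ℝ)] fun r => Real.log (G r) / Real.log r := by
    filter_upwards [self_mem_nhdsWithin] with r hr
    have hr1 : (1:ℝ) < r := hr
    have h1 : r - 1 ≠ 0 := sub_ne_zero.2 hr1.ne'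
    have h2 : Real.log r ≠ 0 := (Real.log_pos hr1).ne'
    simp only [slope_def_field, hG1, Real.log_one]
    field_simp
    ring
  have hratio : Tendsto (fun r => Real.log (G r) / Real.log r) (𝓝[>] (1:ℝ))
      (𝓝 (c / (lam + c))) := hdiv.congr' heq
  -- the exponent bound
  have hq : p + 2 * δ < 2 * c / (lam + c) := by
    rw [← hps]; linarith
  have hhalf : (p + 2 * δ) / 2 < c / (lam + c) := by
    have h2 : 2 * c / (lam + c) = 2 * (c / (lam + c)) := by ring
    rw [h2] at hq
    linarith
  have hev1 : ∀ᶠ r in 𝓝[>] (1:ℝ), (p + 2 * δ) / 2 < Real.log (G r) / Real.log r :=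
    hratio.eventually (eventually_gt_nhds hhalf)
  have hev2 : ∀ᶠ r in 𝓝[>] (1:ℝ), r ∈ Ioo (1:ℝ) 2 :=
    Ioo_mem_nhdsGT_of_mem (by norm_num : (1:ℝ) ∈ Ico (1:ℝ) 2)
  obtain ⟨r, hrat, hrIoo⟩ := (hev1.and hev2).exists
  obtain ⟨hr1, hr2⟩ := hrIoo
  have hsr : 0 < Real.sqrt r := Real.sqrt_pos.2 (by linarith)
  have hDpos : 0 < lam * Real.sqrt r + c := by positivity
  have hGpos : 0 < G r := by
    apply div_pos _ hDpos
    have : (0:ℝ) < r := by linarith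
    positivity
  have hlr : 0 < Real.log r := Real.log_pos hr1
  refine ⟨r, hr1, hr2, ?_, ?_⟩
  · -- r^2 > (G r)^2
    have hGr : G r < r := by
      rw [hGdef]
      rw [div_lt_iff₀ hDpos]
      have : lam * Real.sqrt r < r * (lam * Real.sqrt r) := by
        nlinarith [mul_pos h0 hsr]
      nlinarith
    exact Real.rpow_lt_rpow hGpos.le hGr (by norm_num)
  · -- (G r)^2 > r^(p+2δ)
    have hkey : (p + 2 * δ) / 2 * Real.log r < Real.log (G r) :=
      (lt_div_iff₀ hlr).mp hrat
    have h2log : (p + 2 * δ) * Real.log r < 2 * Real.log (G r) := by linarith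
    have e1 : (G r) ^ (2:ℝ) = Real.exp (2 * Real.log (G r)) := by
      rw [Real.rpow_def_of_pos hGpos, mul_comm]
    have e2 : r ^ (p + 2 * δ) = Real.exp ((p + 2 * δ) * Real.log r) := by
      rw [Real.rpow_def_of_pos (by linarith : (0:ℝ) < r), mul_comm]
    rw [e1, e2]
    exact Real.exp_lt_exp.2 h2log
end

section
/- Let u ∈ W^{1,1}(Ω) on a bounded Lipschitz domain Ω ⊂ ℝⁿ, and suppose that for each i = 1,…,n there exist σ_i ∈ {−1,1} and L_i ∈ ℝ with σ_i ∂_i u ≥ L_i a.e. on Ω. Then for any Ω′ compactly contained in Ω and any ε < ½·dist(closure(Ω′), Ωᶜ), the mollification satisfies (|Du|)_ε ≤ √n · |Du_ε| + 2√n · ‖(L_1,…,L_n)‖_{ℓ²} almost everywhere on Ω′. -/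
open MeasureTheory

lemma my_sum_abs_le_sqrt {n : ℕ} (v : Fin n → ℝ) :
    ∑ i, |v i| ≤ Real.sqrt n * Real.sqrt (∑ i, (v i)^2) := by
  have h := Finset.sum_mul_sq_le_sq_mul_sq Finset.univ (fun _ : Fin n => (1:ℝ)) (fun i => |v i|)
  simp only [one_mul, one_pow, Finset.sum_const, Finset.card_univ, Fintype.card_fin,
    nsmul_eq_mul, mul_one, sq_abs] at h
  calc ∑ i, |v i| = Real.sqrt ((∑ i, |v i|)^2) :=
        (Real.sqrt_sq (Finset.sum_nonneg fun i _ => abs_nonneg _)).symm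
    _ ≤ Real.sqrt ((n : ℝ) * ∑ i, (v i)^2) := Real.sqrt_le_sqrt h
    _ = Real.sqrt n * Real.sqrt (∑ i, (v i)^2) := Real.sqrt_mul (by positivity) _

lemma my_norm_le_sum_abs {n : ℕ} (v : EuclideanSpace ℝ (Fin n)) : ‖v‖ ≤ ∑ i, |v i| := by
  rw [EuclideanSpace.norm_eq]
  have h1 : ∑ i, ‖v i‖^2 ≤ (∑ i, |v i|)^2 := by
    simp only [Real.norm_eq_abs]
    exact Finset.sum_sq_le_sq_sum_of_nonneg (fun i _ => abs_nonneg _)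
  calc Real.sqrt (∑ i, ‖v i‖^2) ≤ Real.sqrt ((∑ i, |v i|)^2) := Real.sqrt_le_sqrt h1
    _ = ∑ i, |v i| := Real.sqrt_sq (Finset.sum_nonneg fun i _ => abs_nonneg _)

lemma my_abs_le_of_le {l b : ℝ} (h : l ≤ b) : |b| ≤ b + 2 * |l| := by
  rcases le_or_gt 0 b with hb | hb
  · rw [abs_of_nonneg hb]; nlinarith [abs_nonneg l]
  · rw [abs_of_neg hb]; nlinarith [neg_abs_le l]

theorem mollified_gradient_one_sided_bounds (n : ℕ) (hn : 1 ≤ n)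
    (Ω Ω' : Set (EuclideanSpace ℝ (Fin n)))
    (hΩo : IsOpen Ω) (hΩb : Bornology.IsBounded Ω)
    (hΩ'o : IsOpen Ω') (hΩ'sub : closure Ω' ⊆ Ω) (hΩ'cpt : IsCompact (closure Ω'))
    (u : EuclideanSpace ℝ (Fin n) → ℝ)
    (Du : EuclideanSpace ℝ (Fin n) → EuclideanSpace ℝ (Fin n))
    (hu : IntegrableOn u Ω) (hDu : IntegrableOn Du Ω)
    (hweak : ∀ ψ : EuclideanSpace ℝ (Fin n) → ℝ, ContDiff ℝ (⊤ : ℕ∞) ψ → HasCompactSupport ψ →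
      tsupport ψ ⊆ Ω → ∀ i : Fin n,
      ∫ x in Ω, u x * fderiv ℝ ψ x (EuclideanSpace.single i 1) = -∫ x in Ω, Du x i * ψ x)
    (σ L : Fin n → ℝ) (hσ : ∀ i, σ i = 1 ∨ σ i = -1)
    (hbound : ∀ᵐ x ∂(volume.restrict Ω), ∀ i, L i ≤ σ i * Du x i)
    (ε : ℝ) (hε : 0 < ε)
    (hεsmall : ∀ x ∈ closure Ω', Metric.ball x (2 * ε) ⊆ Ω)
    (ρ : EuclideanSpace ℝ (Fin n) → ℝ) (hρ : ContDiff ℝ (⊤ : ℕ∞) ρ) (hρ0 : ∀ y, 0 ≤ ρ y)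
    (hρs : tsupport ρ ⊆ Metric.ball 0 ε) (hρi : ∫ y, ρ y = 1) :
    ∀ᵐ x ∂(volume.restrict Ω'),
      (∫ y, ‖Du (x - y)‖ * ρ y) ≤ Real.sqrt n * ‖∫ y, ρ y • Du (x - y)‖
        + 2 * Real.sqrt n * Real.sqrt (∑ i, (L i)^2) := by
  rw [ae_restrict_iff' hΩ'o.measurableSet]
  refine Filter.Eventually.of_forall fun x hx => ?_
  -- geometric facts
  have hball : Metric.ball x ε ⊆ Ω :=
    (Metric.ball_subset_ball (by linarith)).trans (hεsmall x (subset_closure hx))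
  have hsuppρ : ∀ y : EuclideanSpace ℝ (Fin n), ρ y ≠ 0 → y ∈ Metric.ball (0:EuclideanSpace ℝ (Fin n)) ε :=
    fun y hy => hρs (subset_tsupport ρ hy)
  have hmem : ∀ y ∈ Metric.ball (0:EuclideanSpace ℝ (Fin n)) ε, x - y ∈ Ω := by
    intro y hy
    apply hball
    rw [Metric.mem_ball, dist_eq_norm]
    rw [Metric.mem_ball, dist_zero_right] at hy
    simpa [sub_sub_cancel_left] using hy
  -- measure preserving map
  have hT : MeasurePreserving (fun y : EuclideanSpace ℝ (Fin n) => x - y) volume volume :=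
    Measure.measurePreserving_sub_left volume x
  have hTe : MeasurableEmbedding (fun y : EuclideanSpace ℝ (Fin n) => x - y) :=
    (MeasurableEquiv.subLeft x).measurableEmbedding
  have hpre : (fun y : EuclideanSpace ℝ (Fin n) => x - y) ⁻¹' (Metric.ball x ε) = Metric.ball 0 ε := by
    ext y
    simp [Metric.mem_ball, dist_eq_norm, sub_sub_cancel_left]
  have hg : IntegrableOn (fun y : EuclideanSpace ℝ (Fin n) => Du (x - y)) (Metric.ball (0:EuclideanSpace ℝ (Fin n)) ε) volume := by
    have h := (hT.integrableOn_comp_preimage hTe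
      (f := Du) (s := Metric.ball x ε)).mpr (hDu.mono_set hball)
    rw [hpre] at h
    exact h
  -- ρ facts
  have hρc : Continuous ρ := hρ.continuous
  have hρcs : HasCompactSupport ρ :=
    (isCompact_closedBall (0:EuclideanSpace ℝ (Fin n)) ε).of_isClosed_subset (isClosed_tsupport ρ)
      (hρs.trans Metric.ball_subset_closedBall)
  have hρint : Integrable ρ := hρc.integrable_of_hasCompactSupport hρcs
  obtain ⟨C, hC⟩ : ∃ C, ∀ y, ρ y ≤ C := by
    obtain ⟨C, hC⟩ := (hρc.norm.bddAbove_range_of_hasCompactSupport hρcs.norm).exists_ge 0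
    exact ⟨C, fun y => (le_abs_self _).trans ((Real.norm_eq_abs _ ▸ hC.2 _ ⟨y, rfl⟩))⟩
  have habsρ : ∀ y, |ρ y| ≤ C := fun y => by rw [abs_of_nonneg (hρ0 y)]; exact hC y
  -- integrability of the main integrands
  have hf : Integrable (fun y : EuclideanSpace ℝ (Fin n) => ρ y • Du (x - y)) := by
    rw [← integrableOn_iff_integrable_of_support_subset
      (s := Metric.ball (0:EuclideanSpace ℝ (Fin n)) ε) (fun y hy => hsuppρ y (by
        intro h; apply hy; simp [h]))]
    refine Integrable.mono' ((hg.norm).const_mul C)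
      (hρc.aestronglyMeasurable.smul hg.aestronglyMeasurable) ?_
    refine Filter.Eventually.of_forall fun y => ?_
    rw [norm_smul, Real.norm_eq_abs]
    exact mul_le_mul_of_nonneg_right (habsρ y) (norm_nonneg _)
  have hnormf : Integrable (fun y : EuclideanSpace ℝ (Fin n) => ‖Du (x - y)‖ * ρ y) := by
    rw [← integrableOn_iff_integrable_of_support_subset
      (s := Metric.ball (0:EuclideanSpace ℝ (Fin n)) ε) (fun y hy => hsuppρ y (by
        intro h; apply hy; simp [h]))]
    refine Integrable.mono' ((hg.norm).const_mul C)
      (hg.norm.aestronglyMeasurable.mul hρc.aestronglyMeasurable) ?_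
    refine Filter.Eventually.of_forall fun y => ?_
    rw [Real.norm_eq_abs, abs_mul, abs_norm, mul_comm (C : ℝ)]
    exact mul_le_mul_of_nonneg_left (habsρ y) (norm_nonneg _)
  have hfi : ∀ i : Fin n, Integrable (fun y : EuclideanSpace ℝ (Fin n) => ρ y * Du (x - y) i) := by
    intro i
    have h := (EuclideanSpace.proj (𝕜 := ℝ) i).integrable_comp hf
    simpa [smul_eq_mul] using h
  -- identify components of the vector integral
  set V : EuclideanSpace ℝ (Fin n) := ∫ y, ρ y • Du (x - y) with hV
  have hVi : ∀ i : Fin n, ∫ y, ρ y * Du (x - y) i = V i := by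
    intro i
    have h := (EuclideanSpace.proj (𝕜 := ℝ) i).integral_comp_comm hf
    simpa [smul_eq_mul] using h
  -- a.e. lower bound pulled back
  have hae : ∀ᵐ y ∂(volume : Measure (EuclideanSpace ℝ (Fin n))), x - y ∈ Ω → ∀ i, L i ≤ σ i * Du (x - y) i :=
    hT.quasiMeasurePreserving.ae ((ae_restrict_iff' hΩo.measurableSet).mp hbound)
  -- pointwise a.e. inequality
  have key : ∀ᵐ y ∂(volume : Measure (EuclideanSpace ℝ (Fin n))),
      ‖Du (x - y)‖ * ρ y ≤ ∑ i, (σ i * (ρ y * Du (x - y) i) + 2 * |L i| * ρ y) := by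
    filter_upwards [hae] with y hy
    by_cases hρy : ρ y = 0
    · simp [hρy]
    · have hb := hy (hmem y (hsuppρ y hρy))
      have h1 : ‖Du (x - y)‖ ≤ ∑ i, (σ i * Du (x - y) i + 2 * |L i|) := by
        refine (my_norm_le_sum_abs _).trans (Finset.sum_le_sum fun i _ => ?_)
        have habs : |Du (x - y) i| = |σ i * Du (x - y) i| := by
          rcases hσ i with h | h <;> simp [h, abs_mul]
        rw [habs]
        exact my_abs_le_of_le (hb i)
      calc ‖Du (x - y)‖ * ρ y
          ≤ (∑ i, (σ i * Du (x - y) i + 2 * |L i|)) * ρ y :=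
            mul_le_mul_of_nonneg_right h1 (hρ0 y)
        _ = ∑ i, (σ i * (ρ y * Du (x - y) i) + 2 * |L i| * ρ y) := by
            rw [Finset.sum_mul]
            exact Finset.sum_congr rfl fun i _ => by ring
  have hRint : Integrable
      (fun y : EuclideanSpace ℝ (Fin n) => ∑ i, (σ i * (ρ y * Du (x - y) i) + 2 * |L i| * ρ y)) :=
    integrable_finset_sum _ fun i _ => ((hfi i).const_mul _).add
      ((hρint.const_mul (2 * |L i|)).congr (Filter.Eventually.of_forall fun y => by ring))
  have step1 : ∫ y, ‖Du (x - y)‖ * ρ y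
      ≤ ∫ y, ∑ i, (σ i * (ρ y * Du (x - y) i) + 2 * |L i| * ρ y) :=
    integral_mono_ae hnormf hRint key
  have step2 : (∫ y, ∑ i, (σ i * (ρ y * Du (x - y) i) + 2 * |L i| * ρ y))
      = ∑ i, (σ i * V i + 2 * |L i|) := by
    rw [integral_finset_sum (μ := volume)
      (f := fun (i : Fin n) (y : EuclideanSpace ℝ (Fin n)) =>
        σ i * (ρ y * Du (x - y) i) + 2 * |L i| * ρ y) _ (fun i _ => ((hfi i).const_mul _).add
      ((hρint.const_mul (2 * |L i|)).congr (Filter.Eventually.of_forall fun y => by ring)))]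
    refine Finset.sum_congr rfl fun i _ => ?_
    rw [integral_add ((hfi i).const_mul _)
      ((hρint.const_mul (2 * |L i|)).congr (Filter.Eventually.of_forall fun y => by ring)),
      integral_const_mul, hVi i]
    congr 1
    have : (fun y : EuclideanSpace ℝ (Fin n) => 2 * |L i| * ρ y) = fun y => 2 * |L i| * ρ y := rfl
    rw [show (∫ y : EuclideanSpace ℝ (Fin n), 2 * |L i| * ρ y) = 2 * |L i| * ∫ y : EuclideanSpace ℝ (Fin n), ρ y from integral_const_mul _ _,
      hρi, mul_one]
  have hnormV : ‖V‖ = Real.sqrt (∑ i, (V i)^2) := by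
    rw [EuclideanSpace.norm_eq]
    congr 1
    exact Finset.sum_congr rfl fun i _ => by rw [Real.norm_eq_abs, sq_abs]
  have step3 : ∑ i, (σ i * V i + 2 * |L i|)
      ≤ Real.sqrt n * ‖V‖ + 2 * Real.sqrt n * Real.sqrt (∑ i, (L i)^2) := by
    rw [Finset.sum_add_distrib]
    have h31 : ∑ i, σ i * V i ≤ ∑ i, |V i| :=
      Finset.sum_le_sum fun i _ => (le_abs_self _).trans_eq (by
        rcases hσ i with h | h <;> simp [h, abs_mul])
    have h32 : ∑ i, |V i| ≤ Real.sqrt n * Real.sqrt (∑ i, (V i)^2) := my_sum_abs_le_sqrt _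
    have h33 : ∑ i, 2 * |L i| ≤ 2 * Real.sqrt n * Real.sqrt (∑ i, (L i)^2) := by
      rw [← Finset.mul_sum]
      have := my_sum_abs_le_sqrt L
      calc 2 * ∑ i, |L i| ≤ 2 * (Real.sqrt n * Real.sqrt (∑ i, (L i)^2)) := by linarith
        _ = 2 * Real.sqrt n * Real.sqrt (∑ i, (L i)^2) := by ring
    rw [hnormV]
    linarith
  exact step1.trans (step2 ▸ step3)
end

section
/- Let u ∈ W^{1,1}(Ω) with weak partial derivatives satisfying ∂_i u = σ_i |∂_i u| a.e. for fixed signs σ_i ∈ {−1,1}, i = 1,…,n. Then for any x in the domain where mollification is defined, (|Du|)_ε(x) ≤ √n · |Du_ε|(x), where w_ε = w ∗ ρ_ε with ρ_ε a nonnegative mollifier. -/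
open MeasureTheory

theorem mollified_gradient_sign_preserving (n : ℕ) (hn : 1 ≤ n)
    (Ω : Set (EuclideanSpace ℝ (Fin n))) (hΩo : IsOpen Ω) (hΩb : Bornology.IsBounded Ω)
    (u : EuclideanSpace ℝ (Fin n) → ℝ)
    (Du : EuclideanSpace ℝ (Fin n) → EuclideanSpace ℝ (Fin n))
    (hu : IntegrableOn u Ω) (hDu : IntegrableOn Du Ω)
    (hweak : ∀ ψ : EuclideanSpace ℝ (Fin n) → ℝ, ContDiff ℝ (⊤ : ℕ∞) ψ → HasCompactSupport ψ →
      tsupport ψ ⊆ Ω → ∀ i : Fin n,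
      ∫ x in Ω, u x * fderiv ℝ ψ x (EuclideanSpace.single i 1) = -∫ x in Ω, Du x i * ψ x)
    (σ : Fin n → ℝ) (hσ : ∀ i, σ i = 1 ∨ σ i = -1)
    (hsign : ∀ᵐ x ∂(volume.restrict Ω), ∀ i, Du x i = σ i * |Du x i|)
    (ε : ℝ) (hε : 0 < ε)
    (ρ : EuclideanSpace ℝ (Fin n) → ℝ) (hρ : ContDiff ℝ (⊤ : ℕ∞) ρ) (hρ0 : ∀ y, 0 ≤ ρ y)
    (hρs : tsupport ρ ⊆ Metric.ball 0 ε) (hρi : ∫ y, ρ y = 1) :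
    ∀ x : EuclideanSpace ℝ (Fin n), Metric.ball x ε ⊆ Ω →
      (∫ y, ‖Du (x - y)‖ * ρ y) ≤ Real.sqrt n * ‖∫ y, ρ y • Du (x - y)‖ := by
  intro x hx
  set B : Set (EuclideanSpace ℝ (Fin n)) := Metric.ball (0 : EuclideanSpace ℝ (Fin n)) ε with hB
  have hBm : MeasurableSet B := measurableSet_ball
  have hρz : ∀ y ∉ B, ρ y = 0 := fun y hy =>
    image_eq_zero_of_notMem_tsupport (fun h => hy (hρs h))
  have hmem : ∀ y ∈ B, x - y ∈ Ω := by
    intro y hy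
    apply hx
    have : ‖y‖ < ε := mem_ball_zero_iff.1 hy
    simpa [Metric.mem_ball, dist_eq_norm, sub_sub_cancel] using this
  -- measure preserving shift
  have hTmp : MeasurePreserving (fun y : EuclideanSpace ℝ (Fin n) => x - y) volume volume :=
    Measure.measurePreserving_sub_left volume x
  have hTemb : MeasurableEmbedding (fun y : EuclideanSpace ℝ (Fin n) => x - y) :=
    (MeasurableEquiv.subLeft x).measurableEmbedding
  have hpre : (fun y : EuclideanSpace ℝ (Fin n) => x - y) ⁻¹' (Metric.ball x ε) = B := by
    ext y
    simp [Set.mem_preimage, Metric.mem_ball, dist_eq_norm, sub_sub_cancel, hB]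
  -- integrability of Du ∘ shift on B
  have hDuB : IntegrableOn (fun y : EuclideanSpace ℝ (Fin n) => Du (x - y)) B volume := by
    have h1 : IntegrableOn Du (Metric.ball x ε) volume := hDu.mono_set hx
    have := (hTmp.integrableOn_comp_preimage hTemb (f := Du)
      (s := Metric.ball x ε)).2 h1
    rwa [hpre] at this
  -- continuity/boundedness of ρ
  have hρc : Continuous ρ := hρ.continuous
  obtain ⟨C, hC⟩ : ∃ C, ∀ y, |ρ y| ≤ C := by
    have hcs : HasCompactSupport ρ := HasCompactSupport.of_support_subset_isCompact
      (isCompact_closedBall (0:EuclideanSpace ℝ (Fin n)) ε) (subset_trans subset_closure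
        (hρs.trans Metric.ball_subset_closedBall))
    obtain ⟨C, hC⟩ := hcs.exists_bound_of_continuous hρc
    exact ⟨C, fun y => by simpa [Real.norm_eq_abs] using hC y⟩
  -- integrability of main vector integrand
  have key : ∀ (f : EuclideanSpace ℝ (Fin n) → ℝ), (AEStronglyMeasurable (fun y : EuclideanSpace ℝ (Fin n) => f (x - y)) (volume.restrict B)) →
      (∀ᵐ y ∂(volume.restrict B), |f (x - y)| ≤ ‖Du (x - y)‖) →
      Integrable (fun y : EuclideanSpace ℝ (Fin n) => f (x - y) * ρ y) volume := by
    intro f hfm hfb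
    have hint : IntegrableOn (fun y : EuclideanSpace ℝ (Fin n) => f (x - y) * ρ y) B volume := by
      refine Integrable.mono' ((hDuB.norm).smul C) (hfm.mul hρc.aestronglyMeasurable) ?_
      filter_upwards [hfb] with y hy
      have : |f (x - y) * ρ y| ≤ ‖Du (x-y)‖ * C := by
        rw [abs_mul]
        exact mul_le_mul hy (hC y) (abs_nonneg _) (norm_nonneg _)
      simpa [Real.norm_eq_abs, abs_mul, mul_comm] using this
    have heq : (fun y : EuclideanSpace ℝ (Fin n) => f (x - y) * ρ y) = B.indicator (fun y => f (x - y) * ρ y) := by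
      funext y
      by_cases hy : y ∈ B
      · simp [hy]
      · simp [hy, hρz y hy]
    rw [heq]
    exact (integrable_indicator_iff hBm).2 hint
  have hInt : Integrable (fun y : EuclideanSpace ℝ (Fin n) => ρ y • Du (x - y)) volume := by
    have hint : IntegrableOn (fun y : EuclideanSpace ℝ (Fin n) => ρ y • Du (x - y)) B volume := by
      refine Integrable.mono' ((hDuB.norm).smul C) (hρc.aestronglyMeasurable.smul hDuB.aestronglyMeasurable) ?_
      filter_upwards with y
      have : ‖ρ y • Du (x - y)‖ = |ρ y| * ‖Du (x - y)‖ := by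
        simp [norm_smul, Real.norm_eq_abs]
      rw [this]
      calc |ρ y| * ‖Du (x - y)‖ ≤ C * ‖Du (x - y)‖ :=
            mul_le_mul_of_nonneg_right (hC y) (norm_nonneg _)
        _ = C • ‖Du (x - y)‖ := rfl
        _ ≤ _ := by simp [smul_eq_mul, mul_comm]
    have heq : (fun y : EuclideanSpace ℝ (Fin n) => ρ y • Du (x - y)) = B.indicator (fun y => ρ y • Du (x - y)) := by
      funext y
      by_cases hy : y ∈ B
      · simp [hy]
      · simp [hy, hρz y hy]
    rw [heq]
    exact (integrable_indicator_iff hBm).2 hint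
  -- a.e. sign property pulled back
  have hsign' : ∀ᵐ z ∂(volume : Measure (EuclideanSpace ℝ (Fin n))), z ∈ Ω → ∀ i, Du z i = σ i * |Du z i| :=
    (ae_restrict_iff' hΩo.measurableSet).1 hsign
  have hsignT : ∀ᵐ y ∂(volume : Measure (EuclideanSpace ℝ (Fin n))), (x - y) ∈ Ω → ∀ i, Du (x - y) i = σ i * |Du (x - y) i| := by
    have := hTmp.quasiMeasurePreserving.ae hsign'
    simpa using this
  set a : EuclideanSpace ℝ (Fin n) := ∫ y, ρ y • Du (x - y) with ha
  -- coordinates of a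
  have hai : ∀ i : Fin n, a i = ∫ y, ρ y * Du (x - y) i := by
    intro i
    have := (EuclideanSpace.proj (𝕜 := ℝ) i).integral_comp_comm hInt
    simpa [ha] using this.symm
  -- integrability of coordinate integrands
  have hmi : ∀ i : Fin n, AEStronglyMeasurable (fun y : EuclideanSpace ℝ (Fin n) => Du (x - y) i) (volume.restrict B) :=
    fun i => ((EuclideanSpace.proj (𝕜 := ℝ) i).continuous.comp_aestronglyMeasurable
      hDuB.aestronglyMeasurable)
  have hbi : ∀ i : Fin n, ∀ᵐ y ∂(volume.restrict B), |Du (x - y) i| ≤ ‖Du (x - y)‖ := by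
    intro i
    filter_upwards with y
    rw [EuclideanSpace.norm_eq]
    rw [Real.le_sqrt (abs_nonneg _)]
    have := Finset.single_le_sum (f := fun j => ‖Du (x - y) j‖ ^ 2)
      (fun j _ => sq_nonneg _) (Finset.mem_univ i)
    simpa [Real.norm_eq_abs, sq_abs] using this
    positivity
  have hIco : ∀ i : Fin n, Integrable (fun y : EuclideanSpace ℝ (Fin n) => |Du (x - y) i| * ρ y) volume := by
    intro i
    refine key (fun z => |Du z i|) (continuous_abs.comp_aestronglyMeasurable (hmi i)) ?_
    filter_upwards [hbi i] with y hy
    simpa [abs_abs] using hy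
  have hIntN : Integrable (fun y : EuclideanSpace ℝ (Fin n) => ‖Du (x - y)‖ * ρ y) volume := by
    refine key (fun z => ‖Du z‖) hDuB.aestronglyMeasurable.norm ?_
    filter_upwards with y
    simp [abs_norm]
  have hIcoS : Integrable (fun y : EuclideanSpace ℝ (Fin n) => ∑ i : Fin n, |Du (x - y) i| * ρ y) volume :=
    integrable_finset_sum _ (fun i _ => hIco i)
  have step1 : (∫ y, ‖Du (x - y)‖ * ρ y) ≤ ∫ y, ∑ i : Fin n, |Du (x - y) i| * ρ y := by
    refine integral_mono hIntN hIcoS fun y => ?_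
    simp only [← Finset.sum_mul]
    refine mul_le_mul_of_nonneg_right ?_ (hρ0 y)
    rw [EuclideanSpace.norm_eq]
    have h2 : ∑ i : Fin n, ‖Du (x - y) i‖ ^ 2 ≤ (∑ i : Fin n, |Du (x - y) i|) ^ 2 := by
      have := Finset.sum_sq_le_sq_sum_of_nonneg
        (s := Finset.univ) (f := fun i : Fin n => |Du (x - y) i|) (fun i _ => abs_nonneg _)
      simpa [Real.norm_eq_abs, sq_abs] using this
    calc Real.sqrt (∑ i : Fin n, ‖Du (x - y) i‖ ^ 2)
        ≤ Real.sqrt ((∑ i : Fin n, |Du (x - y) i|) ^ 2) := Real.sqrt_le_sqrt h2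
      _ = ∑ i : Fin n, |Du (x - y) i| := Real.sqrt_sq (Finset.sum_nonneg fun i _ => abs_nonneg _)
  have step2 : ∫ y, ∑ i : Fin n, |Du (x - y) i| * ρ y
      = ∑ i : Fin n, ∫ y, |Du (x - y) i| * ρ y :=
    integral_finset_sum _ (fun i _ => hIco i)
  have step3 : ∀ i : Fin n, ∫ y, |Du (x - y) i| * ρ y = σ i * a i := by
    intro i
    rw [hai i, ← integral_const_mul]
    refine integral_congr_ae ?_
    filter_upwards [hsignT] with y hy
    by_cases hyB : y ∈ B
    · have h := hy (hmem y hyB) i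
      rcases hσ i with h1 | h1 <;> rw [h1] at h
      · have hpos : 0 ≤ Du (x - y) i := by rw [h, one_mul]; exact abs_nonneg _
        rw [h1, abs_of_nonneg hpos]; ring
      · have hneg : Du (x - y) i ≤ 0 := by
          rw [h]
          nlinarith [abs_nonneg (Du (x - y) i)]
        rw [h1, abs_of_nonpos hneg]; ring
    · simp [hρz y hyB]
  have step4 : ∀ i : Fin n, σ i * a i = |a i| := by
    intro i
    have hnn : 0 ≤ σ i * a i := by
      rw [← step3 i]
      exact integral_nonneg fun y => mul_nonneg (abs_nonneg _) (hρ0 y)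
    rcases hσ i with h1 | h1 <;> rw [h1] at hnn ⊢
    · rw [one_mul] at hnn ⊢; exact (abs_of_nonneg hnn).symm
    · have : a i ≤ 0 := by linarith
      rw [abs_of_nonpos this]; ring
  have step5 : ∑ i : Fin n, |a i| ≤ Real.sqrt n * ‖a‖ := by
    rw [EuclideanSpace.norm_eq]
    have cs := Finset.sum_mul_sq_le_sq_mul_sq Finset.univ
      (fun _ : Fin n => (1 : ℝ)) (fun i => |a i|)
    have h0 : 0 ≤ ∑ i : Fin n, |a i| := Finset.sum_nonneg fun i _ => abs_nonneg _
    calc ∑ i : Fin n, |a i| = Real.sqrt ((∑ i : Fin n, |a i|) ^ 2) := (Real.sqrt_sq h0).symm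
      _ ≤ Real.sqrt ((n : ℝ) * ∑ i : Fin n, |a i| ^ 2) := by
          refine Real.sqrt_le_sqrt ?_
          simpa using cs
      _ = Real.sqrt n * Real.sqrt (∑ i : Fin n, ‖a i‖ ^ 2) := by
          rw [Real.sqrt_mul (by positivity)]
          simp [Real.norm_eq_abs]
  calc (∫ y, ‖Du (x - y)‖ * ρ y)
      ≤ ∫ y, ∑ i : Fin n, |Du (x - y) i| * ρ y := step1
    _ = ∑ i : Fin n, ∫ y, |Du (x - y) i| * ρ y := step2
    _ = ∑ i : Fin n, |a i| := by
        refine Finset.sum_congr rfl fun i _ => ?_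
        rw [step3 i, step4 i]
    _ ≤ Real.sqrt n * ‖a‖ := step5
end
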